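/- arXiv:q-bio/0611007 — 4 statements merged into one kernel-verified Lean document; each statement's English description precedes it below -/
import Mathlib

section
/- For the 2-state symmetric Markov process on the rooted three-taxon tree T1 with internal branch length t0 ≥ 0 and pendant branch lengths t1 ≥ 0, define p1(t0,t1) = (1/4)(1 + e^{-4t1} - 2e^{-4(t0+t1)}) and p2(t0,t1) = (1/4)(1 - e^{-4t1}). Then p1(t0,t1)/p2(t0,t1) ≥ 1 + 2e^{-4t1}(1 - e^{-4t0}) whenever p2(t0,t1) > 0. -/
/-- For the 2-state symmetric model on the rooted 3-taxon tree,
p1/p2 ≥ 1 + 2 e^{-4t1}(1 - e^{-4t0}) whenever p2 > 0. -/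
theorem star_paradox_ratio_bound (t0 t1 : ℝ) (ht0 : 0 ≤ t0) (ht1 : 0 ≤ t1)
    (hp2 : 0 < (1/4) * (1 - Real.exp (-4*t1))) :
    ((1/4) * (1 + Real.exp (-4*t1) - 2 * Real.exp (-4*(t0+t1)))) /
      ((1/4) * (1 - Real.exp (-4*t1))) ≥
      1 + 2 * Real.exp (-4*t1) * (1 - Real.exp (-4*t0)) := by
  have hab : Real.exp (-4*(t0+t1)) = Real.exp (-4*t0) * Real.exp (-4*t1) := by
    rw [← Real.exp_add]; ring_nf
  have ha : 0 < Real.exp (-4*t1) := Real.exp_pos _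
  have hb1 : Real.exp (-4*t0) ≤ 1 := by
    rw [Real.exp_le_one_iff]; nlinarith
  rw [ge_iff_le, le_div_iff₀ hp2, hab]
  nlinarith [sq_nonneg (Real.exp (-4*t1)), Real.exp_pos (-4*t0)]
end

section
/- Let x ∈ [0,1) and let y = (1+2x)(1-x)^2. Then for every real m ≥ 3, ((1+2x)/(1-x))^m ≥ m^2 (1 - y). -/
/-- Lemma 2 of the paper: for x ∈ [0,1), y = (1+2x)(1-x)^2 and real m ≥ 3,
((1+2x)/(1-x))^m ≥ m^2 (1-y). -/
theorem star_paradox_lemma2 (x : ℝ) (hx0 : 0 ≤ x) (hx1 : x < 1)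
    (y : ℝ) (hy : y = (1 + 2*x) * (1 - x)^2) (m : ℝ) (hm : 3 ≤ m) :
    ((1 + 2*x) / (1 - x)) ^ m ≥ m^2 * (1 - y) := by
  have hx1' : (0:ℝ) < 1 - x := by linarith
  set t : ℝ := x / (1 - x) with htdef
  have ht0 : 0 ≤ t := div_nonneg hx0 hx1'.le
  have htx : x ≤ t := by
    rw [htdef, le_div_iff₀ hx1']; nlinarith
  have hr : (1 + 2*x) / (1 - x) = 1 + 3 * t := by
    field_simp [htdef]; rw [htdef]; field_simp; ring
  have hm3 : (1:ℝ) ≤ m / 3 := by linarith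
  -- Bernoulli: (1+3t)^(m/3) ≥ 1 + (m/3)*(3t) = 1 + m*t
  have hbern : 1 + m * t ≤ (1 + 3*t) ^ (m/3) := by
    have := one_add_mul_self_le_rpow_one_add (s := 3*t) (by linarith) hm3
    calc 1 + m * t = 1 + (m/3) * (3*t) := by ring
      _ ≤ (1 + 3*t) ^ (m/3) := this
  have hbase : (0:ℝ) ≤ 1 + 3*t := by linarith
  have hkey : ((1 + 3*t) ^ (m/3)) ^ (3:ℕ) = (1 + 3*t) ^ m := by
    rw [← Real.rpow_natCast ((1 + 3*t) ^ (m/3)) 3, ← Real.rpow_mul hbase]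
    norm_num
  have hpow3 : (1 + m*t)^(3:ℕ) ≤ (1 + 3*t) ^ m := by
    rw [← hkey]
    exact pow_le_pow_left₀ (by nlinarith) hbern 3
  have hmt : 0 ≤ m * t := by positivity
  have h2 : m^2 * (1 - y) ≤ (1 + m*t)^(3:ℕ) := by
    have h1y : 1 - y = x^2 * (3 - 2*x) := by rw [hy]; ring
    have h3x : x^2 * (3 - 2*x) ≤ 3 * t^2 := by nlinarith
    nlinarith [sq_nonneg (m*t), sq_nonneg m, sq_nonneg t, mul_nonneg hmt (mul_nonneg hmt hmt)]
  rw [hr]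
  calc m^2 * (1 - y) ≤ (1 + m*t)^(3:ℕ) := h2
    _ ≤ (1 + 3*t) ^ m := hpow3
end

section
/- Let Z be a random variable on [0,1] with a continuously differentiable density f satisfying f(1) ≠ 0 and |f'(z)| ≤ B for all z ∈ (η,1] for some η < 1. Then there exists K (depending only on B/f(1) and η) such that for all k ≥ K, k·(E[Z^k] - E[Z^{k+1}])/E[Z^k] ≥ 1/2. -/
open MeasureTheory Filter Topology

set_option maxHeartbeats 1000000 in
/-- Lemma 1 of the paper: there exists K such that for all k ≥ K,
k·(E[Z^k] - E[Z^{k+1}])/E[Z^k] ≥ 1/2. -/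
theorem star_paradox_lemma1 {Ω : Type*} [MeasurableSpace Ω] (μ : Measure Ω)
    [IsProbabilityMeasure μ]
    (Z : Ω → ℝ) (hZ : ∀ ω, Z ω ∈ Set.Icc (0:ℝ) 1)
    (f f' : ℝ → ℝ) (hf : ContinuousOn f (Set.Icc 0 1))
    (hfnn : ∀ t ∈ Set.Icc (0:ℝ) 1, 0 ≤ f t)
    (η : ℝ) (hη : η < 1)
    (hderiv : ∀ z ∈ Set.Ioc η 1, HasDerivAt f (f' z) z)
    (hf'cont : ContinuousOn f' (Set.Ioc η 1))
    (B : ℝ) (hB : ∀ z ∈ Set.Ioc η 1, |f' z| ≤ B)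
    (hdens : ∀ k : ℕ, (∫ ω, (Z ω) ^ k ∂μ) = ∫ t in (0:ℝ)..1, t ^ k * f t)
    (hf1 : f 1 ≠ 0) :
    ∃ K : ℕ, ∀ k : ℕ, K ≤ k →
      (k : ℝ) * ((∫ ω, (Z ω) ^ k ∂μ) - ∫ ω, (Z ω) ^ (k+1) ∂μ) / (∫ ω, (Z ω) ^ k ∂μ)
        ≥ 1/2 := by
  have h1mem : (1:ℝ) ∈ Set.Icc (0:ℝ) 1 := by norm_num
  set c := f 1 with hc_def
  have hc : 0 < c := lt_of_le_of_ne (hfnn 1 h1mem) (Ne.symm hf1)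
  have hB0 : 0 ≤ B := (abs_nonneg _).trans (hB 1 ⟨hη, le_refl 1⟩)
  set a0 := max η 0 with ha0_def
  have ha00 : 0 ≤ a0 := le_max_right _ _
  have ha01 : a0 < 1 := max_lt hη one_pos
  obtain ⟨F, hF⟩ := isCompact_Icc.exists_bound_of_continuousOn hf
  have hF0 : 0 ≤ F := (norm_nonneg _).trans (hF 1 h1mem)
  -- Mean value theorem bound near 1
  have hkey : ∀ t ∈ Set.Icc a0 1, |f t - c| ≤ B * (1 - t) := by
    intro t ht
    rcases eq_or_lt_of_le ht.2 with h | h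
    · rw [h]; simp [hc_def]
    · have hcont : ContinuousOn f (Set.Icc t 1) :=
        hf.mono (Set.Icc_subset_Icc (ha00.trans ht.1) le_rfl)
      have hd : ∀ x ∈ Set.Ioo t 1, HasDerivAt f (f' x) x := fun x hx =>
        hderiv x ⟨lt_of_le_of_lt (le_trans (le_max_left η 0) ht.1) hx.1, hx.2.le⟩
      obtain ⟨ξ, hξ, hsl⟩ := exists_hasDerivAt_eq_slope f f' h hcont hd
      have h1t : (0:ℝ) < 1 - t := by linarith
      have heq : f t - c = -(f' ξ * (1 - t)) := by
        rw [hsl, div_mul_cancel₀ _ h1t.ne']; ring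
      rw [heq, abs_neg, abs_mul, abs_of_pos h1t]
      exact mul_le_mul_of_nonneg_right
        (hB ξ ⟨lt_of_le_of_lt (le_trans (le_max_left η 0) ht.1) hξ.1, hξ.2.le⟩) h1t.le
  -- integrability helper
  have hIntPf : ∀ (g : ℝ → ℝ), Continuous g → ∀ a b : ℝ, 0 ≤ a → a ≤ b → b ≤ 1 →
      IntervalIntegrable (fun t => g t * f t) volume a b := by
    intro g hg a b h0 hab h1
    apply ContinuousOn.intervalIntegrable
    apply hg.continuousOn.mul (hf.mono ?_)
    rw [Set.uIcc_of_le hab]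
    exact Set.Icc_subset_Icc h0 h1
  -- positivity of the moments
  have hMpos : ∀ n : ℕ, 0 < ∫ t in (0:ℝ)..1, t ^ n * f t := by
    intro n
    set b := max a0 (1 - c / (2 * (B + 1))) with hbdef
    have hcB : 0 < c / (2 * (B + 1)) := by positivity
    have hb0 : 0 ≤ b := ha00.trans (le_max_left _ _)
    have hb1 : b < 1 := max_lt ha01 (by linarith)
    have hi1 : IntervalIntegrable (fun t => t ^ n * f t) volume 0 b :=
      hIntPf _ (by fun_prop) 0 b le_rfl hb0 hb1.le
    have hi2 : IntervalIntegrable (fun t => t ^ n * f t) volume b 1 :=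
      hIntPf _ (by fun_prop) b 1 hb0 hb1.le le_rfl
    have h01 : 0 ≤ ∫ t in (0:ℝ)..b, t ^ n * f t := by
      apply intervalIntegral.integral_nonneg hb0
      intro u hu
      exact mul_nonneg (pow_nonneg hu.1 n) (hfnn u ⟨hu.1, hu.2.trans hb1.le⟩)
    have h02 : 0 < ∫ t in b..(1:ℝ), t ^ n * f t := by
      apply intervalIntegral.intervalIntegral_pos_of_pos_on hi2 _ hb1
      intro t ht
      have hta : t ∈ Set.Icc a0 1 := ⟨((le_max_left _ _).trans_lt ht.1).le, ht.2.le⟩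
      have h1 := (abs_le.1 (hkey t hta)).1
      have h2 : 1 - t < c / (2 * (B + 1)) := by
        have hb2 : 1 - c / (2 * (B + 1)) ≤ b := le_max_right _ _
        linarith [ht.1]
      have h3 : (B + 1) * (c / (2 * (B + 1))) = c / 2 := by
        field_simp
      have h4 : B * (1 - t) < c / 2 := by
        have hB1 : (0:ℝ) < B + 1 := by linarith
        have h5 : (B + 1) * (1 - t) < (B + 1) * (c / (2 * (B + 1))) :=
          mul_lt_mul_of_pos_left h2 hB1
        nlinarith [ht.2]
      have hft : 0 < f t := by linarith
      exact mul_pos (pow_pos (lt_of_le_of_lt hb0 ht.1) n) hft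
    rw [← intervalIntegral.integral_add_adjacent_intervals hi1 hi2]
    linarith
  -- geometric decay of tail terms
  have ha0abs : |a0| < 1 := by rwa [abs_of_nonneg ha00]
  have hgeo0 : Tendsto (fun n : ℕ =>
      2*(F+2*c) * (((n:ℝ)+1)^2 * ((n:ℝ)+2) * ((n:ℝ)+3)) * a0 ^ n) atTop (𝓝 0) := by
    have h4 := tendsto_pow_const_mul_const_pow_of_abs_lt_one 4 ha0abs
    have h3 := tendsto_pow_const_mul_const_pow_of_abs_lt_one 3 ha0abs
    have h2 := tendsto_pow_const_mul_const_pow_of_abs_lt_one 2 ha0abs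
    have h1 := tendsto_pow_const_mul_const_pow_of_abs_lt_one 1 ha0abs
    have h0 := tendsto_pow_const_mul_const_pow_of_abs_lt_one 0 ha0abs
    have hsum : Tendsto (fun n : ℕ => 2*(F+2*c) *
        (((n:ℝ)^4*a0^n) + 7*((n:ℝ)^3*a0^n) + 17*((n:ℝ)^2*a0^n)
          + 17*((n:ℝ)^1*a0^n) + 6*((n:ℝ)^0*a0^n))) atTop
        (𝓝 (2*(F+2*c) * (0 + 7*0 + 17*0 + 17*0 + 6*0))) := by
      apply Tendsto.const_mul
      exact (((h4.add (h3.const_mul 7)).add (h2.const_mul 17)).add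
        (h1.const_mul 17)).add (h0.const_mul 6)
    have heq : (fun n : ℕ => 2*(F+2*c) * (((n:ℝ)+1)^2 * ((n:ℝ)+2) * ((n:ℝ)+3)) * a0 ^ n)
        = fun n : ℕ => 2*(F+2*c) *
        (((n:ℝ)^4*a0^n) + 7*((n:ℝ)^3*a0^n) + 17*((n:ℝ)^2*a0^n)
          + 17*((n:ℝ)^1*a0^n) + 6*((n:ℝ)^0*a0^n)) := funext fun n => by ring
    rw [heq]
    convert hsum using 2
    norm_num
  have hev1 : ∀ᶠ n : ℕ in atTop,
      2*(F+2*c) * (((n:ℝ)+1)^2 * ((n:ℝ)+2) * ((n:ℝ)+3)) * a0 ^ n ≤ 1 :=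
    hgeo0.eventually (eventually_le_nhds one_pos)
  have hev2 : ∀ᶠ n : ℕ in atTop, 5*B + 1 ≤ c * ((n:ℝ) - 2) := by
    have ht : Tendsto (fun n : ℕ => c * ((n:ℝ) - 2)) atTop atTop := by
      apply Tendsto.const_mul_atTop hc
      exact tendsto_atTop_add_const_right atTop (-2) tendsto_natCast_atTop_atTop
    exact ht.eventually_ge_atTop _
  obtain ⟨K, hK⟩ := eventually_atTop.1 (hev1.and hev2)
  refine ⟨K, fun k hk => ?_⟩
  obtain ⟨hk1, hk2⟩ := hK k hk
  rw [hdens k, hdens (k+1)]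
  have hMk := hMpos k
  rw [ge_iff_le, le_div_iff₀ hMk]
  -- main estimate: 0 ≤ ∫ t^k (k(1-t) - 1/2) f
  have hIk : 0 ≤ ∫ t in (0:ℝ)..1, (t^k * ((k:ℝ)*(1-t) - 1/2)) * f t := by
    have hPc : Continuous (fun t : ℝ => t^k * ((k:ℝ)*(1-t) - 1/2)) := by fun_prop
    have iPf0a : IntervalIntegrable (fun t => (t^k * ((k:ℝ)*(1-t) - 1/2)) * f t) volume 0 a0 :=
      hIntPf _ hPc 0 a0 le_rfl ha00 ha01.le
    have iPfa1 : IntervalIntegrable (fun t => (t^k * ((k:ℝ)*(1-t) - 1/2)) * f t) volume a0 1 :=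
      hIntPf _ hPc a0 1 ha00 ha01.le le_rfl
    have hsplit := intervalIntegral.integral_add_adjacent_intervals iPf0a iPfa1
    -- tail bound with f
    have htail1 : |∫ t in (0:ℝ)..a0, (t^k * ((k:ℝ)*(1-t) - 1/2)) * f t|
        ≤ ((k:ℝ)+1) * F * a0^k := by
      have hbnd : ∀ t ∈ Set.uIoc (0:ℝ) a0,
          ‖(t^k * ((k:ℝ)*(1-t) - 1/2)) * f t‖ ≤ a0^k * ((k:ℝ)+1) * F := by
        intro t ht
        rw [Set.uIoc_of_le ha00] at ht
        have ht0 : 0 < t := ht.1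
        have hta : t ≤ a0 := ht.2
        have ht1 : t ≤ 1 := hta.trans ha01.le
        have hknn : (0:ℝ) ≤ (k:ℝ)*(1-t) := mul_nonneg (Nat.cast_nonneg k) (by linarith)
        have hkub : (k:ℝ)*(1-t) ≤ (k:ℝ) := by
          nlinarith [Nat.cast_nonneg (α := ℝ) k]
        rw [norm_mul, norm_mul, Real.norm_eq_abs, Real.norm_eq_abs, Real.norm_eq_abs,
          abs_pow, abs_of_pos ht0]
        have e1 : t^k ≤ a0^k := pow_le_pow_left₀ ht0.le hta k
        have e2 : |(k:ℝ)*(1-t) - 1/2| ≤ (k:ℝ)+1 := by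
          rw [abs_le]; constructor <;> linarith
        have e3 : |f t| ≤ F := (Real.norm_eq_abs (f t)) ▸ hF t ⟨ht0.le, ht1⟩
        refine mul_le_mul ?_ e3 (abs_nonneg _) (by positivity)
        exact mul_le_mul e1 e2 (abs_nonneg _) (pow_nonneg ha00 k)
      have := intervalIntegral.norm_integral_le_of_norm_le_const hbnd
      rw [Real.norm_eq_abs] at this
      have ha0le : |a0 - 0| ≤ 1 := by rw [abs_of_nonneg (by linarith)]; linarith
      calc |∫ t in (0:ℝ)..a0, (t^k * ((k:ℝ)*(1-t) - 1/2)) * f t|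
          ≤ a0^k * ((k:ℝ)+1) * F * |a0 - 0| := this
        _ ≤ ((k:ℝ)+1) * F * a0^k := by
            nlinarith [pow_nonneg ha00 k, Nat.cast_nonneg (α := ℝ) k,
              mul_nonneg (pow_nonneg ha00 k) (mul_nonneg (by positivity : (0:ℝ) ≤ (k:ℝ)+1) hF0)]
    -- tail bound without f
    have htail2 : |∫ t in (0:ℝ)..a0, t^k * ((k:ℝ)*(1-t) - 1/2)| ≤ ((k:ℝ)+1) * a0^k := by
      have hbnd : ∀ t ∈ Set.uIoc (0:ℝ) a0,
          ‖t^k * ((k:ℝ)*(1-t) - 1/2)‖ ≤ a0^k * ((k:ℝ)+1) := by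
        intro t ht
        rw [Set.uIoc_of_le ha00] at ht
        have ht0 : 0 < t := ht.1
        have hta : t ≤ a0 := ht.2
        have ht1 : t ≤ 1 := hta.trans ha01.le
        have hknn : (0:ℝ) ≤ (k:ℝ)*(1-t) := mul_nonneg (Nat.cast_nonneg k) (by linarith)
        have hkub : (k:ℝ)*(1-t) ≤ (k:ℝ) := by
          nlinarith [Nat.cast_nonneg (α := ℝ) k]
        rw [norm_mul, Real.norm_eq_abs, Real.norm_eq_abs, abs_pow, abs_of_pos ht0]
        have e1 : t^k ≤ a0^k := pow_le_pow_left₀ ht0.le hta k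
        have e2 : |(k:ℝ)*(1-t) - 1/2| ≤ (k:ℝ)+1 := by
          rw [abs_le]; constructor <;> linarith
        exact mul_le_mul e1 e2 (abs_nonneg _) (pow_nonneg ha00 k)
      have := intervalIntegral.norm_integral_le_of_norm_le_const hbnd
      rw [Real.norm_eq_abs] at this
      have ha0le : |a0 - 0| ≤ 1 := by rw [abs_of_nonneg (by linarith)]; linarith
      calc |∫ t in (0:ℝ)..a0, t^k * ((k:ℝ)*(1-t) - 1/2)|
          ≤ a0^k * ((k:ℝ)+1) * |a0 - 0| := this
        _ ≤ ((k:ℝ)+1) * a0^k := by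
            nlinarith [pow_nonneg ha00 k, Nat.cast_nonneg (α := ℝ) k,
              mul_nonneg (pow_nonneg ha00 k) (by positivity : (0:ℝ) ≤ (k:ℝ)+1)]
    -- pointwise comparison on [a0, 1]
    have hmono : ∫ t in a0..(1:ℝ),
          (c * (t^k * ((k:ℝ)*(1-t) - 1/2)) - B * ((1-t) * (t^k * ((k:ℝ)*(1-t) + 1/2))))
        ≤ ∫ t in a0..(1:ℝ), (t^k * ((k:ℝ)*(1-t) - 1/2)) * f t := by
      apply intervalIntegral.integral_mono_on ha01.le _ iPfa1
      · intro t ht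
        have h0t : 0 ≤ t := ha00.trans ht.1
        have ht1 : t ≤ 1 := ht.2
        have hknn : (0:ℝ) ≤ (k:ℝ)*(1-t) := mul_nonneg (Nat.cast_nonneg k) (by linarith)
        have h1 := hkey t ht
        have habs : |t^k * ((k:ℝ)*(1-t) - 1/2)| ≤ t^k * ((k:ℝ)*(1-t) + 1/2) := by
          rw [abs_mul, abs_pow, abs_of_nonneg h0t]
          apply mul_le_mul_of_nonneg_left _ (pow_nonneg h0t k)
          rw [abs_le]; constructor <;> linarith
        have hna := neg_abs_le ((t^k * ((k:ℝ)*(1-t) - 1/2)) * (f t - c))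
        rw [abs_mul] at hna
        have hle : |t^k * ((k:ℝ)*(1-t) - 1/2)| * |f t - c|
            ≤ (t^k * ((k:ℝ)*(1-t) + 1/2)) * (B*(1-t)) := by
          apply mul_le_mul habs h1 (abs_nonneg _)
          exact mul_nonneg (pow_nonneg h0t k) (by linarith)
        nlinarith [hna, hle]
      · apply Continuous.intervalIntegrable
        fun_prop
    -- evaluation of polynomial integrals
    have hIP : ∫ t in (0:ℝ)..1, t^k * ((k:ℝ)*(1-t) - 1/2)
        = ((k:ℝ)-1/2)/((k:ℝ)+1) - (k:ℝ)/((k:ℝ)+2) := by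
      rw [show (fun t:ℝ => t^k * ((k:ℝ)*(1-t) - 1/2))
          = (fun t:ℝ => ((k:ℝ)-1/2) * t^k - (k:ℝ) * t^(k+1)) from funext fun t => by ring]
      rw [intervalIntegral.integral_sub
          ((intervalIntegral.intervalIntegrable_pow k).const_mul _)
          ((intervalIntegral.intervalIntegrable_pow (k+1)).const_mul _),
        intervalIntegral.integral_const_mul, intervalIntegral.integral_const_mul,
        integral_pow, integral_pow]
      push_cast
      rw [one_pow, one_pow, zero_pow (by omega), zero_pow (by omega)]
      ring
    have hIW : ∫ t in (0:ℝ)..1, (1-t) * (t^k * ((k:ℝ)*(1-t) + 1/2))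
        = ((k:ℝ)+1/2)/((k:ℝ)+1) - (2*(k:ℝ)+1/2)/((k:ℝ)+2) + (k:ℝ)/((k:ℝ)+3) := by
      rw [show (fun t:ℝ => (1-t) * (t^k * ((k:ℝ)*(1-t) + 1/2)))
          = (fun t:ℝ => (((k:ℝ)+1/2) * t^k - (2*(k:ℝ)+1/2) * t^(k+1)) + (k:ℝ) * t^(k+2))
          from funext fun t => by ring]
      rw [intervalIntegral.integral_add
          (((intervalIntegral.intervalIntegrable_pow k).const_mul _).sub
            ((intervalIntegral.intervalIntegrable_pow (k+1)).const_mul _))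
          ((intervalIntegral.intervalIntegrable_pow (k+2)).const_mul _),
        intervalIntegral.integral_sub
          ((intervalIntegral.intervalIntegrable_pow k).const_mul _)
          ((intervalIntegral.intervalIntegrable_pow (k+1)).const_mul _),
        intervalIntegral.integral_const_mul, intervalIntegral.integral_const_mul,
        intervalIntegral.integral_const_mul, integral_pow, integral_pow, integral_pow]
      push_cast
      rw [one_pow, one_pow, one_pow, zero_pow (by omega), zero_pow (by omega),
        zero_pow (by omega)]
      ring
    -- splittings of the polynomial integrals
    have hPc' : Continuous (fun t : ℝ => t^k * ((k:ℝ)*(1-t) - 1/2)) := hPc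
    have hWc : Continuous (fun t : ℝ => (1-t) * (t^k * ((k:ℝ)*(1-t) + 1/2))) := by fun_prop
    have hsplitP := intervalIntegral.integral_add_adjacent_intervals
      (a := (0:ℝ)) (b := a0) (c := 1)
      (hPc'.intervalIntegrable (μ := volume) _ _) (hPc'.intervalIntegrable (μ := volume) _ _)
    have hWadj := intervalIntegral.integral_add_adjacent_intervals
      (a := (0:ℝ)) (b := a0) (c := 1)
      (hWc.intervalIntegrable (μ := volume) _ _) (hWc.intervalIntegrable (μ := volume) _ _)
    have hWnn : 0 ≤ ∫ t in (0:ℝ)..a0, (1-t) * (t^k * ((k:ℝ)*(1-t) + 1/2)) := by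
      apply intervalIntegral.integral_nonneg ha00
      intro u hu
      have hu1 : u ≤ 1 := hu.2.trans ha01.le
      have : (0:ℝ) ≤ (k:ℝ)*(1-u) := mul_nonneg (Nat.cast_nonneg k) (by linarith)
      apply mul_nonneg (by linarith)
      apply mul_nonneg (pow_nonneg hu.1 k) (by linarith)
    -- linear decomposition of the compared integral
    have hsub : ∫ t in a0..(1:ℝ),
          (c * (t^k * ((k:ℝ)*(1-t) - 1/2)) - B * ((1-t) * (t^k * ((k:ℝ)*(1-t) + 1/2))))
        = c * (∫ t in a0..(1:ℝ), t^k * ((k:ℝ)*(1-t) - 1/2))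
          - B * (∫ t in a0..(1:ℝ), (1-t) * (t^k * ((k:ℝ)*(1-t) + 1/2))) := by
      rw [intervalIntegral.integral_sub ((hPc'.intervalIntegrable (μ := volume) _ _).const_mul _)
          ((hWc.intervalIntegrable (μ := volume) _ _).const_mul _),
        intervalIntegral.integral_const_mul, intervalIntegral.integral_const_mul]
    have hPa1 : c * (∫ t in a0..(1:ℝ), t^k * ((k:ℝ)*(1-t) - 1/2))
        = c * (((k:ℝ)-1/2)/((k:ℝ)+1) - (k:ℝ)/((k:ℝ)+2))
          - c * (∫ t in (0:ℝ)..a0, t^k * ((k:ℝ)*(1-t) - 1/2)) := by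
      rw [← hIP, ← hsplitP]; ring
    have q1 : c * (∫ t in (0:ℝ)..a0, t^k * ((k:ℝ)*(1-t) - 1/2)) ≤ c * (((k:ℝ)+1) * a0^k) :=
      mul_le_mul_of_nonneg_left (abs_le.1 htail2).2 hc.le
    have hWa1 : (∫ t in a0..(1:ℝ), (1-t) * (t^k * ((k:ℝ)*(1-t) + 1/2)))
        ≤ ((k:ℝ)+1/2)/((k:ℝ)+1) - (2*(k:ℝ)+1/2)/((k:ℝ)+2) + (k:ℝ)/((k:ℝ)+3) := by
      rw [← hIW]; linarith [hWadj, hWnn]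
    have q2 : B * (∫ t in a0..(1:ℝ), (1-t) * (t^k * ((k:ℝ)*(1-t) + 1/2)))
        ≤ B * (((k:ℝ)+1/2)/((k:ℝ)+1) - (2*(k:ℝ)+1/2)/((k:ℝ)+2) + (k:ℝ)/((k:ℝ)+3)) :=
      mul_le_mul_of_nonneg_left hWa1 hB0
    -- final numeric inequality
    have hu2 : (2:ℝ) < (k:ℝ) := by
      by_contra h
      push_neg at h
      have : c * ((k:ℝ) - 2) ≤ 0 := mul_nonpos_of_nonneg_of_nonpos hc.le (by linarith)
      linarith
    have hXfinal : 0 ≤ c * (((k:ℝ)-1/2)/((k:ℝ)+1) - (k:ℝ)/((k:ℝ)+2))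
        - B * (((k:ℝ)+1/2)/((k:ℝ)+1) - (2*(k:ℝ)+1/2)/((k:ℝ)+2) + (k:ℝ)/((k:ℝ)+3))
        - (((k:ℝ)+1) * F * a0^k + c * (((k:ℝ)+1) * a0^k)) := by
      set u := (k:ℝ) with hu
      have hD : (0:ℝ) < 2*(u+1)*(u+2)*(u+3) := by positivity
      have ha0k : (0:ℝ) ≤ a0^k := pow_nonneg ha00 k
      have hRHS : 0 ≤ c*((u-2)*(u+3)) - B*(5*u+3)
          - 2*(F+c)*(u+1)^2*(u+2)*(u+3)*a0^k := by
        have hpolnn : (0:ℝ) ≤ (u+1)^2*(u+2)*(u+3)*a0^k := by positivity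
        have h1 : 2*(F+c)*(u+1)^2*(u+2)*(u+3)*a0^k
            ≤ 2*(F+2*c) * ((u+1)^2 * (u+2) * (u+3)) * a0^k := by nlinarith [hc]
        nlinarith [mul_le_mul_of_nonneg_right hk2 (show (0:ℝ) ≤ u+3 by linarith), hk1, hB0]
      have hne1 : u + 1 ≠ 0 := by positivity
      have hne2 : u + 2 ≠ 0 := by positivity
      have hne3 : u + 3 ≠ 0 := by positivity
      have hXD : (c * ((u-1/2)/(u+1) - u/(u+2))
          - B * ((u+1/2)/(u+1) - (2*u+1/2)/(u+2) + u/(u+3))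
          - ((u+1) * F * a0^k + c * ((u+1) * a0^k))) * (2*(u+1)*(u+2)*(u+3))
          = c*((u-2)*(u+3)) - B*(5*u+3) - 2*(F+c)*(u+1)^2*(u+2)*(u+3)*a0^k := by
        field_simp
        ring
      have hdiv := div_nonneg hRHS hD.le
      rwa [← hXD, mul_div_cancel_right₀ _ hD.ne'] at hdiv
    linarith [hsplit, (abs_le.1 htail1).1, hmono, hsub, hPa1, q1, q2, hXfinal]
  -- convert the integral inequality into the stated one
  have i1 : IntervalIntegrable (fun t => t^k * f t) volume 0 1 :=
    hIntPf _ (by fun_prop) 0 1 le_rfl zero_le_one le_rfl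
  have i2 : IntervalIntegrable (fun t => t^(k+1) * f t) volume 0 1 :=
    hIntPf _ (by fun_prop) 0 1 le_rfl zero_le_one le_rfl
  have hexp : ∫ t in (0:ℝ)..1, (t^k * ((k:ℝ)*(1-t) - 1/2)) * f t
      = (k:ℝ) * (∫ t in (0:ℝ)..1, t^k * f t)
        - ((k:ℝ) * (∫ t in (0:ℝ)..1, t^(k+1) * f t)
          + (1/2) * (∫ t in (0:ℝ)..1, t^k * f t)) := by
    rw [show (fun t:ℝ => (t^k * ((k:ℝ)*(1-t) - 1/2)) * f t)
        = (fun t:ℝ => (k:ℝ) * (t^k * f t)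
            - ((k:ℝ) * (t^(k+1) * f t) + (1/2) * (t^k * f t)))
        from funext fun t => by ring]
    rw [intervalIntegral.integral_sub (i1.const_mul _) ((i2.const_mul _).add (i1.const_mul _)),
      intervalIntegral.integral_add (i2.const_mul _) (i1.const_mul _),
      intervalIntegral.integral_const_mul, intervalIntegral.integral_const_mul,
      intervalIntegral.integral_const_mul]
  linarith [hIk, hexp]
end

section
/- The map (t0, t1) ↦ (p0(t0,t1), z(t0,t1)), where p0(t0,t1) = (1/4)(1 + e^{-4t1} + 2e^{-4(t0+t1)}) and z(t0,t1) = (1+2u)(1-u)^2 with u = (p1 - p2)/(1 - p0), p1 = (1/4)(1 + e^{-4t1} - 2e^{-4(t0+t1)}), p2 = (1/4)(1 - e^{-4t1}), is an injective smooth map from (0,∞)^2 into (1/4, 1) × (0,1). -/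
noncomputable def starP0 (t0 t1 : ℝ) : ℝ :=
  (1/4) * (1 + Real.exp (-4*t1) + 2 * Real.exp (-4*(t0+t1)))

noncomputable def starP1 (t0 t1 : ℝ) : ℝ :=
  (1/4) * (1 + Real.exp (-4*t1) - 2 * Real.exp (-4*(t0+t1)))

noncomputable def starP2 (t0 t1 : ℝ) : ℝ :=
  (1/4) * (1 - Real.exp (-4*t1))

noncomputable def starU (t0 t1 : ℝ) : ℝ :=
  (starP1 t0 t1 - starP2 t0 t1) / (1 - starP0 t0 t1)

noncomputable def starZ (t0 t1 : ℝ) : ℝ :=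
  (1 + 2 * starU t0 t1) * (1 - starU t0 t1)^2

noncomputable def starMap (p : ℝ × ℝ) : ℝ × ℝ :=
  (starP0 p.1 p.2, starZ p.1 p.2)

/-- auxiliary: facts about the exponentials at a point of the domain -/
lemma star_aux (t0 t1 : ℝ) (h0 : 0 < t0) (h1 : 0 < t1) :
    0 < Real.exp (-4*(t0+t1)) ∧ Real.exp (-4*(t0+t1)) < Real.exp (-4*t1) ∧
      Real.exp (-4*t1) < 1 := by
  refine ⟨Real.exp_pos _, Real.exp_lt_exp.mpr (by linarith), Real.exp_lt_one_iff.mpr (by linarith)⟩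

lemma starU_bounds (t0 t1 : ℝ) (h0 : 0 < t0) (h1 : 0 < t1) :
    0 < starU t0 t1 ∧ starU t0 t1 < 1 := by
  obtain ⟨hb, hba, ha⟩ := star_aux t0 t1 h0 h1
  set a := Real.exp (-4*t1)
  set b := Real.exp (-4*(t0+t1))
  have hnum : starP1 t0 t1 - starP2 t0 t1 = (a - b) / 2 := by
    unfold starP1 starP2; ring
  have hden : 1 - starP0 t0 t1 = (3 - a - 2*b) / 4 := by
    unfold starP0; ring
  have hdpos : (0:ℝ) < (3 - a - 2*b) / 4 := by
    have hb1 : b < 1 := lt_trans hba ha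
    linarith
  constructor
  · rw [starU, hnum, hden]
    exact div_pos (by linarith) hdpos
  · rw [starU, hnum, hden]
    rw [div_lt_one hdpos]
    linarith

lemma cubic_inj {u v : ℝ} (hu0 : 0 < u) (hu1 : u < 1) (hv0 : 0 < v) (hv1 : v < 1)
    (h : (1 + 2*u)*(1-u)^2 = (1 + 2*v)*(1-v)^2) : u = v := by
  have key : (u - v) * (2*(u^2 + u*v + v^2) - 3*(u+v)) = 0 := by linear_combination h
  have h2 : 2*(u^2 + u*v + v^2) - 3*(u+v) < 0 := by
    nlinarith [sq_nonneg (u - v), mul_pos hu0 (sub_pos.mpr hu1), mul_pos hv0 (sub_pos.mpr hv1)]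
  have := mul_eq_zero.mp key
  rcases this with h' | h'
  · linarith [sub_eq_zero.mp h']
  · linarith

/-- the map (t0,t1) ↦ (p0, z) is an injective smooth map from
(0,∞)² into (1/4,1) × (0,1). -/
theorem star_paradox_smooth_injective :
    Set.InjOn starMap (Set.Ioi (0:ℝ) ×ˢ Set.Ioi (0:ℝ)) ∧
    ContDiffOn ℝ (⊤ : ℕ∞) starMap (Set.Ioi (0:ℝ) ×ˢ Set.Ioi (0:ℝ)) ∧
    Set.MapsTo starMap (Set.Ioi (0:ℝ) ×ˢ Set.Ioi (0:ℝ))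
      (Set.Ioo (1/4 : ℝ) 1 ×ˢ Set.Ioo (0:ℝ) 1) := by
  refine ⟨?_, ?_, ?_⟩
  · -- injectivity
    rintro ⟨t0, t1⟩ ⟨ht0, ht1⟩ ⟨s0, s1⟩ ⟨hs0, hs1⟩ h
    simp only [Set.mem_Ioi] at ht0 ht1 hs0 hs1
    obtain ⟨h1, h2⟩ := Prod.mk.injEq .. ▸ h
    simp only [starMap] at h1 h2
    obtain ⟨hbt, hbat, hat⟩ := star_aux t0 t1 ht0 ht1
    obtain ⟨hbs, hbas, has⟩ := star_aux s0 s1 hs0 hs1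
    obtain ⟨hut0, hut1⟩ := starU_bounds t0 t1 ht0 ht1
    obtain ⟨hus0, hus1⟩ := starU_bounds s0 s1 hs0 hs1
    have hu : starU t0 t1 = starU s0 s1 :=
      cubic_inj hut0 hut1 hus0 hus1 h2
    set a := Real.exp (-4*t1)
    set b := Real.exp (-4*(t0+t1))
    set a' := Real.exp (-4*s1)
    set b' := Real.exp (-4*(s0+s1))
    have hp0 : a + 2*b = a' + 2*b' := by
      simp only [starP0] at h1; linarith
    have hden : 1 - starP0 t0 t1 = (3 - a - 2*b) / 4 := by unfold starP0; ring
    have hden' : 1 - starP0 s0 s1 = (3 - a' - 2*b') / 4 := by unfold starP0; ring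
    have hnum : starP1 t0 t1 - starP2 t0 t1 = (a - b) / 2 := by unfold starP1 starP2; ring
    have hnum' : starP1 s0 s1 - starP2 s0 s1 = (a' - b') / 2 := by unfold starP1 starP2; ring
    have hdpos : (0:ℝ) < (3 - a - 2*b) / 4 := by
      have : b < 1 := lt_trans hbat hat
      linarith
    have hueq : (a - b) / 2 / ((3 - a - 2*b)/4) = (a' - b') / 2 / ((3 - a - 2*b)/4) := by
      have := hu
      rw [starU, starU, hnum, hden, hnum', hden'] at this
      rw [this]
      congr 2
      linarith
    have hab : a - b = a' - b' := by
      have := mul_right_cancel₀ (ne_of_gt hdpos) ((div_eq_div_iff (ne_of_gt hdpos) (ne_of_gt hdpos)).mp hueq)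
      linarith
    have ha : a = a' := by linarith
    have hb : b = b' := by linarith
    have ht1s1 : t1 = s1 := by
      have := Real.exp_injective ha; linarith
    have : t0 + t1 = s0 + s1 := by
      have := Real.exp_injective hb; linarith
    have : t0 = s0 := by linarith
    exact Prod.ext this ht1s1
  · -- smoothness
    have hP0 : ContDiff ℝ (⊤ : ℕ∞) (fun p : ℝ × ℝ => starP0 p.1 p.2) := by
      unfold starP0; fun_prop
    have hP1 : ContDiff ℝ (⊤ : ℕ∞) (fun p : ℝ × ℝ => starP1 p.1 p.2) := by
      unfold starP1; fun_prop
    have hP2 : ContDiff ℝ (⊤ : ℕ∞) (fun p : ℝ × ℝ => starP2 p.1 p.2) := by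
      unfold starP2; fun_prop
    have hden : ∀ p ∈ (Set.Ioi (0:ℝ) ×ˢ Set.Ioi (0:ℝ)),
        1 - starP0 p.1 p.2 ≠ 0 := by
      rintro ⟨t0, t1⟩ ⟨ht0, ht1⟩
      simp only [Set.mem_Ioi] at ht0 ht1
      obtain ⟨hb, hba, ha⟩ := star_aux t0 t1 ht0 ht1
      have hb1 : Real.exp (-4*(t0+t1)) < 1 := lt_trans hba ha
      unfold starP0
      intro hcontra
      nlinarith
    have hU : ContDiffOn ℝ (⊤ : ℕ∞) (fun p : ℝ × ℝ => starU p.1 p.2)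
        (Set.Ioi (0:ℝ) ×ˢ Set.Ioi (0:ℝ)) := by
      unfold starU
      exact ContDiffOn.div ((hP1.sub hP2).contDiffOn)
        ((contDiff_const.sub hP0).contDiffOn) hden
    apply ContDiffOn.prodMk
    · exact hP0.contDiffOn
    · unfold starZ
      exact ((contDiffOn_const.add (contDiffOn_const.mul hU)).mul
        ((contDiffOn_const.sub hU).pow 2))
  · -- maps to
    rintro ⟨t0, t1⟩ ⟨ht0, ht1⟩
    simp only [Set.mem_Ioi] at ht0 ht1
    obtain ⟨hb, hba, ha⟩ := star_aux t0 t1 ht0 ht1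
    have hb1 : Real.exp (-4*(t0+t1)) < 1 := lt_trans hba ha
    obtain ⟨hu0, hu1⟩ := starU_bounds t0 t1 ht0 ht1
    constructor
    · constructor
      · unfold starMap starP0; simp only; nlinarith
      · unfold starMap starP0; simp only; nlinarith
    · constructor
      · unfold starMap starZ; simp only
        exact mul_pos (by linarith) (pow_pos (by linarith) 2)
      · unfold starMap starZ; simp only
        nlinarith [sq_nonneg (starU t0 t1)]
end
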